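/- The ℂ-linear map 𝓕 → 𝓕 given on each summand by 𝓕_{AB} → 𝓕_{BA}, f ↦ f^# where f^#((x,y), ε) = f((y,x), ε), is an algebra antiautomorphism of 𝓕: it is a linear bijection satisfying (f ⋆ g)^# = g^# ⋆ f^# for all f, g ∈ 𝓕. -/
import Mathlib


open scoped Classical

set_option linter.unusedSectionVars false

noncomputable section

namespace Lusztig

variable (E X : Type) [AddCommGroup E] [Module (ZMod 2) E] [Fintype E]
  [Fintype X] [AddAction E X]

/-- The stabilizer of `x` in `E`, as a subset of `E`. -/
def stabSet (x : X) : Set E := {e : E | e +ᵥ x = x}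

/-- `X_A`: the set of points of `X` whose stabilizer in `E` equals `A`. -/
def XA (A : Submodule (ZMod 2) E) : Set X := {x : X | stabSet E X x = (A : Set E)}

/-- `X²_{AB} = X_A × X_B`. -/
def X2 (A B : Submodule (ZMod 2) E) : Set (X × X) := (XA E X A) ×ˢ (XA E X B)

/-- The `E`-orbit of `x` in `X`. -/
def orb (x : X) : Set X := {y : X | ∃ e : E, y = e +ᵥ x}

/-- The `E`-orbit of `(x,y)` for the diagonal action of `E` on `X × X`. -/
def orb2 (x y : X) : Set (X × X) := {q : X × X | ∃ e : E, q = (e +ᵥ x, e +ᵥ y)}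

/-- `O` is an `E`-orbit (for the diagonal action) contained in `X²_{AB}`. -/
def IsOrb2 (A B : Submodule (ZMod 2) E) (O : Set (X × X)) : Prop :=
  ∃ x y : X, x ∈ XA E X A ∧ y ∈ XA E X B ∧ O = orb2 E X x y

/-- The `E × B`-orbit of `(x,y)` for the action `(e,b)·(x,y) = (e+b+x, e+y)`. -/
def orbEB (B : Submodule (ZMod 2) E) (x y : X) : Set (X × X) :=
  {q : X × X | ∃ e b : E, b ∈ B ∧ q = ((e + b) +ᵥ x, e +ᵥ y)}

/-- `M` is an `E × B`-orbit contained in `X²_{AC}` for the action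
`(e,b)·(x,y) = (e+b+x, e+y)`. -/
def IsOrbEB (A B C : Submodule (ZMod 2) E) (M : Set (X × X)) : Prop :=
  ∃ x y : X, x ∈ XA E X A ∧ y ∈ XA E X C ∧ M = orbEB E X B x y

/-- Image under the first projection. -/
def p1 (S : Set (X × X)) : Set X := Prod.fst '' S

/-- Image under the second projection. -/
def p2 (S : Set (X × X)) : Set X := Prod.snd '' S

/-- `U_{ABC} = {(a,b,c) ∈ A × B × C : a + b + c = 0}`. -/
def UABC (A B C : Submodule (ZMod 2) E) : Set (E × E × E) :=
  {t : E × E × E | t.1 ∈ A ∧ t.2.1 ∈ B ∧ t.2.2 ∈ C ∧ t.1 + t.2.1 + t.2.2 = 0}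

/-- `X̄_C`: the set of `E`-orbits contained in `X_C`. -/
def barX (C : Submodule (ZMod 2) E) : Set (Set X) :=
  {s : Set X | ∃ x ∈ XA E X C, s = orb E X x}

/-- The dual (space of linear forms `P → ℤ/2`) of a subspace `P` of `E`. -/
abbrev Dl (P : Submodule (ZMod 2) E) : Type := ↥P →ₗ[ZMod 2] ZMod 2

/-- Restriction of a linear form along an inclusion of subspaces. -/
def res {P Q : Submodule (ZMod 2) E} (h : P ≤ Q) (φ : Dl E Q) : Dl E P :=
  φ.comp (Submodule.inclusion h)

theorem leAB (A B C : Submodule (ZMod 2) E) : A ⊓ B ⊓ C ≤ A ⊓ B := inf_le_left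
theorem leBC (A B C : Submodule (ZMod 2) E) : A ⊓ B ⊓ C ≤ B ⊓ C :=
  le_inf (inf_le_left.trans inf_le_right) inf_le_right
theorem leAC (A B C : Submodule (ZMod 2) E) : A ⊓ B ⊓ C ≤ A ⊓ C :=
  le_inf (inf_le_left.trans inf_le_left) inf_le_right
theorem leBA (A B : Submodule (ZMod 2) E) : A ⊓ B ≤ B ⊓ A := le_inf inf_le_right inf_le_left

/-- The convolution product `𝓕_{AB} × 𝓕_{BC} → 𝓕_{AC}`. -/
def conv (A B C : Submodule (ZMod 2) E)
    (f₁ : (X × X) × Dl E (A ⊓ B) → ℂ) (f₂ : (X × X) × Dl E (B ⊓ C) → ℂ) :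
    (X × X) × Dl E (A ⊓ C) → ℂ :=
  fun p =>
    (∑ᶠ (y : X) (_ : y ∈ XA E X B) (ε₁ : Dl E (A ⊓ B)) (ε₂ : Dl E (B ⊓ C))
        (_ : res E (leAB E A B C) ε₁ + res E (leBC E A B C) ε₂
              + res E (leAC E A B C) p.2 = 0),
        f₁ ((p.1.1, y), ε₁) * f₂ ((y, p.1.2), ε₂)) *
      (Nat.card ↥(A ⊓ B ⊓ C) : ℂ) / (Nat.card ↥(A ⊓ C) : ℂ)

/-- The defining conditions for membership in `𝓕_{AB}`: supported on `X²_{AB}` and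
invariant under the diagonal `E`-action. -/
def MemF (A B : Submodule (ZMod 2) E) (f : (X × X) × Dl E (A ⊓ B) → ℂ) : Prop :=
  (∀ p : (X × X) × Dl E (A ⊓ B), p.1 ∉ X2 E X A B → f p = 0) ∧
  (∀ (e : E) (x y : X) (ε : Dl E (A ⊓ B)), f ((e +ᵥ x, e +ᵥ y), ε) = f ((x, y), ε))

/-- `𝓕_{AB}` as a subspace of the space of all functions. -/
def FAB (A B : Submodule (ZMod 2) E) : Submodule ℂ ((X × X) × Dl E (A ⊓ B) → ℂ) where
  carrier := {f | MemF E X A B f}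
  add_mem' := by
    intro a b ha hb
    exact ⟨fun p hp => by simp [ha.1 p hp, hb.1 p hp],
      fun e x y ε => by simp [Pi.add_apply, ha.2 e x y ε, hb.2 e x y ε]⟩
  zero_mem' := ⟨fun p hp => rfl, fun e x y ε => rfl⟩
  smul_mem' := by
    intro c a ha
    exact ⟨fun p hp => by simp [Pi.smul_apply, ha.1 p hp],
      fun e x y ε => by simp [Pi.smul_apply, ha.2 e x y ε]⟩

/-- `[Ξ]^ε`. -/
def br (A B : Submodule (ZMod 2) E) (Ξ : Set (X × X)) (ε : Dl E (A ⊓ B)) :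
    (X × X) × Dl E (A ⊓ B) → ℂ :=
  fun p => if p.1 ∈ Ξ ∧ p.2 = ε then 1 else 0

/-- The ambient space of `𝓕 = ⊕_{A,B} 𝓕_{AB}` (all summands at once). -/
abbrev FF : Type := ∀ A B : Submodule (ZMod 2) E, (X × X) × Dl E (A ⊓ B) → ℂ

/-- The embedding of the `(A,B)` summand into `𝓕`. -/
def emb (A B : Submodule (ZMod 2) E) (f : (X × X) × Dl E (A ⊓ B) → ℂ) : FF E X :=
  fun A' B' p =>
    if h : A = A' ∧ B = B' then f (p.1, cast (by rw [h.1, h.2]) p.2) else 0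

/-- `𝓕` as a subspace of `FF`: componentwise supported on `X²_{AB}` and `E`-invariant. -/
def FFsub : Submodule ℂ (FF E X) where
  carrier := {g | ∀ A B, MemF E X A B (g A B)}
  add_mem' := by
    intro a b ha hb A B
    exact ⟨fun p hp => by simp [(ha A B).1 p hp, (hb A B).1 p hp],
      fun e x y ε => by simp [(ha A B).2 e x y ε, (hb A B).2 e x y ε]⟩
  zero_mem' := fun A B => ⟨fun p hp => rfl, fun e x y ε => rfl⟩
  smul_mem' := by
    intro c a ha A B
    exact ⟨fun p hp => by simp [(ha A B).1 p hp],
      fun e x y ε => by simp [(ha A B).2 e x y ε]⟩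

/-- The product on `𝓕` (zero between summands `𝓕_{AB}`, `𝓕_{B'C}` with `B ≠ B'`). -/
def mulFF (g h : FF E X) : FF E X :=
  fun A C => ∑ᶠ B : Submodule (ZMod 2) E, conv E X A B C (g A B) (h B C)

/-- The diagonal `Δ_A ⊆ X²_{AA}`. -/
def diagSet (A : Submodule (ZMod 2) E) : Set (X × X) :=
  {q : X × X | q.1 ∈ XA E X A ∧ q.2 = q.1}

/-- The element `∑_A [Δ_A]^0` of `𝓕`. -/
def unitFF : FF E X :=
  ∑ᶠ A : Submodule (ZMod 2) E, emb E X A A (br E X A A (diagSet E X A) 0)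

/-- The map `f ↦ f^#` on `𝓕`. -/
def shFF (g : FF E X) : FF E X :=
  fun A B p => g B A ((p.1.2, p.1.1), res E (leBA E B A) p.2)

/-- `𝒪 • 𝒪'`. -/
def bullet (O O' : Set (X × X)) : Set (X × X) :=
  {q : X × X | ∃ y : X, (q.1, y) ∈ O ∧ (y, q.2) ∈ O'}

/-- `∑_{ε ∈ α̃} [𝓜]^ε ∈ 𝓕_{AC}`, where `α̃` is the fibre of
`(A∩C)* → (A∩B∩C)*` over `α`. -/
def bSum (A B C : Submodule (ZMod 2) E) (M : Set (X × X)) (α : Dl E (A ⊓ B ⊓ C)) :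
    (X × X) × Dl E (A ⊓ C) → ℂ :=
  ∑ᶠ (ε : Dl E (A ⊓ C)) (_ : res E (leAC E A B C) ε = α), br E X A C M ε

/-- The set `𝓑_{oBC} ⊆ 𝓕` (embedded in `FF`). -/
def BoBC (A B C : Submodule (ZMod 2) E) (o : Set X) : Set (FF E X) :=
  {g | ∃ (M : Set (X × X)) (α : Dl E (A ⊓ B ⊓ C)),
      IsOrbEB E X A B C M ∧ p1 X M = o ∧ g = emb E X A C (bSum E X A B C M α)}

/-- The set `𝓑_{oB} = ⊔_C 𝓑_{oBC}`. -/
def BoB (A B : Submodule (ZMod 2) E) (o : Set X) : Set (FF E X) :=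
  ⋃ C : Submodule (ZMod 2) E, BoBC E X A B C o

/-- `[[oB]]`, the `ℂ`-span of `𝓑_{oB}`. -/
def ooB (A B : Submodule (ZMod 2) E) (o : Set X) : Submodule ℂ (FF E X) :=
  Submodule.span ℂ (BoB E X A B o)


instance instFiniteDl (P : Submodule (ZMod 2) E) : Finite (Dl E P) :=
  Finite.of_injective (fun f => (f : ↥P → ZMod 2)) DFunLike.coe_injective

instance instFiniteSubmod : Finite (Submodule (ZMod 2) E) :=
  Finite.of_injective (fun S => (S : Set E)) SetLike.coe_injective

/-- Transport of linear forms along mutually inverse inclusions of subspaces. -/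
def dlEquiv {P Q : Submodule (ZMod 2) E} (h1 : P ≤ Q) (h2 : Q ≤ P) : Dl E Q ≃ Dl E P where
  toFun := res E h1
  invFun := res E h2
  left_inv := fun φ => rfl
  right_inv := fun φ => rfl

theorem cond_iff (A B C : Submodule (ZMod 2) E) (ζ : Dl E (A ⊓ C))
    (η₁ : Dl E (A ⊓ B)) (η₂ : Dl E (B ⊓ C)) :
    (res E (leAB E A B C) η₁ + res E (leBC E A B C) η₂ + res E (leAC E A B C) ζ = 0) ↔
    (res E (leAB E C B A) (res E (leBA E C B) η₂)
      + res E (leBC E C B A) (res E (leBA E B A) η₁)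
      + res E (leAC E C B A) (res E (leBA E C A) ζ) = 0) := by
  constructor
  · intro hyp
    ext v
    have hv : v.1 ∈ A ⊓ B ⊓ C := by
      have h2 := v.2; simp only [Submodule.mem_inf] at h2 ⊢; tauto
    have h0 : η₁ ⟨v.1, leAB E A B C hv⟩ + η₂ ⟨v.1, leBC E A B C hv⟩
        + ζ ⟨v.1, leAC E A B C hv⟩ = 0 := LinearMap.congr_fun hyp ⟨v.1, hv⟩
    show η₂ ⟨v.1, leBC E A B C hv⟩ + η₁ ⟨v.1, leAB E A B C hv⟩
        + ζ ⟨v.1, leAC E A B C hv⟩ = 0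
    linear_combination h0
  · intro hyp
    ext v
    have hv : v.1 ∈ C ⊓ B ⊓ A := by
      have h2 := v.2; simp only [Submodule.mem_inf] at h2 ⊢; tauto
    have h0 : η₂ ⟨v.1, leBC E A B C v.2⟩ + η₁ ⟨v.1, leAB E A B C v.2⟩
        + ζ ⟨v.1, leAC E A B C v.2⟩ = 0 := LinearMap.congr_fun hyp ⟨v.1, hv⟩
    show η₁ ⟨v.1, leAB E A B C v.2⟩ + η₂ ⟨v.1, leBC E A B C v.2⟩
        + ζ ⟨v.1, leAC E A B C v.2⟩ = 0
    linear_combination h0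

theorem conv_sh (g h : FF E X) (A B C : Submodule (ZMod 2) E) (x z : X) (ζ : Dl E (A ⊓ C)) :
    conv E X C B A (g C B) (h B A) ((z, x), res E (leBA E C A) ζ) =
      conv E X A B C (shFF E X h A B) (shFF E X g B C) ((x, z), ζ) := by
  have e1 : (C ⊓ B ⊓ A : Submodule (ZMod 2) E) = A ⊓ B ⊓ C := by
    rw [inf_comm (C ⊓ B) A, inf_comm C B, ← inf_assoc]
  have e2 : (C ⊓ A : Submodule (ZMod 2) E) = A ⊓ C := inf_comm C A
  have c1 : ((Nat.card ↥(C ⊓ B ⊓ A) : ℕ) : ℂ) = ((Nat.card ↥(A ⊓ B ⊓ C) : ℕ) : ℂ) := by rw [e1]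
  have c2 : ((Nat.card ↥(C ⊓ A) : ℕ) : ℂ) = ((Nat.card ↥(A ⊓ C) : ℕ) : ℂ) := by rw [e2]
  unfold conv
  rw [c1, c2]
  refine congrArg (fun t => t * ((Nat.card ↥(A ⊓ B ⊓ C) : ℕ) : ℂ)
    / ((Nat.card ↥(A ⊓ C) : ℕ) : ℂ)) ?_
  refine finsum_congr fun y => ?_
  refine finsum_congr fun hy => ?_
  letI : Fintype (Dl E (C ⊓ B)) := Fintype.ofFinite _
  letI : Fintype (Dl E (B ⊓ A)) := Fintype.ofFinite _
  letI : Fintype (Dl E (A ⊓ B)) := Fintype.ofFinite _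
  letI : Fintype (Dl E (B ⊓ C)) := Fintype.ofFinite _
  simp only [finsum_eq_sum_of_fintype, finsum_eq_if]
  rw [Finset.sum_comm]
  refine (Fintype.sum_equiv (dlEquiv E (leBA E B A) (leBA E A B)) _ _ fun η₁ => ?_).symm
  refine Fintype.sum_equiv (dlEquiv E (leBA E C B) (leBA E B C)) _ _ fun η₂ => ?_
  exact if_congr (cond_iff E A B C ζ η₁ η₂) (mul_comm _ _) rfl

theorem shFF_invol : Function.Involutive (shFF E X) := by
  intro g
  funext A B p
  rfl

/-- `f ↦ f^#` is an algebra antiautomorphism of `𝓕`: a `ℂ`-linear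
bijection (preserving `𝓕` inside the ambient space) with `(f ⋆ g)^# = g^# ⋆ f^#`. -/
theorem statement4 :
    (∀ (c : ℂ) (g : FF E X), shFF E X (c • g) = c • shFF E X g) ∧
    (∀ g h : FF E X, shFF E X (g + h) = shFF E X g + shFF E X h) ∧
    Function.Bijective (shFF E X) ∧
    (∀ g ∈ FFsub E X, shFF E X g ∈ FFsub E X) ∧
    Set.BijOn (shFF E X) (FFsub E X : Set (FF E X)) (FFsub E X : Set (FF E X)) ∧
    (∀ g ∈ FFsub E X, ∀ h ∈ FFsub E X,
      shFF E X (mulFF E X g h) = mulFF E X (shFF E X h) (shFF E X g)) := by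
  have hinv := shFF_invol E X
  have hbij : Function.Bijective (shFF E X) := hinv.bijective
  have hmem : ∀ g ∈ FFsub E X, shFF E X g ∈ FFsub E X := by
    intro g hg A B
    constructor
    · intro p hp
      refine (hg B A).1 _ ?_
      simp only [X2, Set.mem_prod] at hp ⊢
      tauto
    · intro e x y ε
      exact (hg B A).2 e y x _
  refine ⟨fun c g => rfl, fun g h => rfl, hbij, hmem,
    ⟨fun g hg => hmem g hg, fun a _ b _ hab => hbij.injective hab,
      fun g hg => ⟨shFF E X g, hmem g hg, hinv g⟩⟩, ?_⟩
  intro g hg h hh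
  funext A C p
  show (mulFF E X g h) C A ((p.1.2, p.1.1), res E (leBA E C A) p.2) = _
  unfold mulFF
  letI : Fintype (Submodule (ZMod 2) E) := Fintype.ofFinite _
  rw [finsum_eq_sum_of_fintype, finsum_eq_sum_of_fintype]
  simp only [Finset.sum_apply]
  refine Finset.sum_congr rfl fun B _ => ?_
  exact conv_sh E X g h A B C p.1.1 p.1.2 p.2

end Lusztig
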